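/- Let G = G(m₀,m₁,m₂,m₃) with all mᵢ ≥ 2. Then every set of three pairwise nonadjacent vertices of G has a common neighbor. -/

import Mathlib

/-- The edge set of the tournament `T₄`. -/
def T4rel (i i' : Fin 4) : Prop :=
  (i.val, i'.val) ∈ [(0, 1), (0, 2), (0, 3), (1, 2), (2, 3), (3, 1)]

/-- The twisted graph `G(m₀, m₁, m₂, m₃)` where `m i` is the number of 4-cycles
in part `i`.  Vertices are triples `(i, j, x)` with `i ∈ Fin 4`, `j < m i`,
`x ∈ Z/4`. -/
def twistedGraph (m : Fin 4 → ℕ) :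
    SimpleGraph {v : Fin 4 × ℕ × ZMod 4 // v.2.1 < m v.1} where
  Adj p q :=
    (p.1.1 = q.1.1 ∧ p.1.2.1 = q.1.2.1 ∧
      (q.1.2.2 = p.1.2.2 + 1 ∨ p.1.2.2 = q.1.2.2 + 1)) ∨
    (p.1.1 = q.1.1 ∧ p.1.2.1 ≠ q.1.2.1 ∧ q.1.2.2 = p.1.2.2 + 2) ∨
    (T4rel p.1.1 q.1.1 ∧ q.1.2.2 = p.1.2.2 + 3) ∨
    (T4rel q.1.1 p.1.1 ∧ p.1.2.2 = q.1.2.2 + 3)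
  symm := by
    constructor
    rintro ⟨⟨i, j, x⟩, hp⟩ ⟨⟨i', j', x'⟩, hq⟩ h
    dsimp at h ⊢
    rcases h with ⟨h1, h2, h3⟩ | ⟨h1, h2, h3⟩ | ⟨h1, h2⟩ | ⟨h1, h2⟩
    · exact Or.inl ⟨h1.symm, h2.symm, h3.symm⟩
    · refine Or.inr (Or.inl ⟨h1.symm, Ne.symm h2, ?_⟩)
      rw [h3, add_assoc, show (2 : ZMod 4) + 2 = 0 by decide, add_zero]
    · exact Or.inr (Or.inr (Or.inr ⟨h1, h2⟩))
    · exact Or.inr (Or.inr (Or.inl ⟨h1, h2⟩))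
  loopless := by
    constructor
    rintro ⟨⟨i, j, x⟩, hp⟩ h
    dsimp at h
    rcases h with ⟨-, -, h | h⟩ | ⟨-, h, -⟩ | ⟨h, -⟩ | ⟨h, -⟩
    · simp only [left_eq_add] at h; exact absurd h (by decide)
    · simp only [left_eq_add] at h; exact absurd h (by decide)
    · exact h rfl
    · revert h; have := i.is_lt; unfold T4rel; fin_cases i <;> decide
    · revert h; have := i.is_lt; unfold T4rel; fin_cases i <;> decide

/-!
Adjacency in `G(m)` depends only on the parts of the two vertices, the difference of their
positions, and whether they lie on the same cycle.  Translating all positions is therefore an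
automorphism, and a triple `p, q, r` can be relabelled into `G(3,3,3,3)` with `p` at position `0`
on cycle `0`, without changing adjacency among `p, q, r`.  A finite check in that model finds a
common neighbour `z` whose cycle is either the cycle of a triple vertex in the same part, or a
cycle other than the at most one cycle the triple uses in `z`'s part; since every `mᵢ ≥ 2`, such a
cycle exists in `G(m)` too, and `z` lifts to a common neighbour of `p, q, r`.
-/

namespace TwistedGraph

abbrev Vertex (m : Fin 4 → ℕ) := {v : Fin 4 × ℕ × ZMod 4 // v.2.1 < m v.1}

/-- `T₄`: the vertex `0` beats everyone, and `1 → 2 → 3 → 1`. -/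
def isArc (i i' : ℕ) : Bool :=
  (i == 0 && i' != 0) || (i != 0 && i' == i % 3 + 1)

theorem T4rel_iff_isArc (i i' : Fin 4) : T4rel i i' ↔ isArc i i' = true := by
  unfold T4rel; revert i i'; decide

/-- Adjacency of `(i, j, x)` and `(i', j', x')`, where `s = (j == j')` and `δ = (x' - x).val`. -/
def offsetAdj (s : Bool) (i i' δ : ℕ) : Bool :=
  (i == i' && s && (δ == 1 || δ == 3)) || (i == i' && !s && δ == 2) ||
    (isArc i i' && δ == 3) || (isArc i' i && δ == 1)

theorem offsetAdj_iff (s : Bool) (i i' : Fin 4) (x x' : ZMod 4) :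
    offsetAdj s i i' (x' - x).val = true ↔
      (i = i' ∧ s = true ∧ (x' = x + 1 ∨ x = x' + 1)) ∨ (i = i' ∧ s = false ∧ x' = x + 2) ∨
        (T4rel i i' ∧ x' = x + 3) ∨ (T4rel i' i ∧ x = x' + 3) := by
  simp only [T4rel_iff_isArc]; revert s i i' x x'; decide

theorem offsetAdj_congr {s t : Bool} {i i' : ℕ} (h : i = i' → s = t) (δ : ℕ) :
    offsetAdj s i i' δ = offsetAdj t i i' δ := by
  by_cases hi : i = i'
  · rw [h hi]
  · simp [offsetAdj, beq_eq_false_iff_ne.2 hi]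

theorem twistedGraph_adj_iff {m : Fin 4 → ℕ} (p q : Vertex m) :
    (twistedGraph m).Adj p q ↔
      offsetAdj (p.1.2.1 == q.1.2.1) p.1.1 q.1.1 (q.1.2.2 - p.1.2.2).val = true := by
  simp only [offsetAdj_iff, beq_iff_eq, beq_eq_false_iff_ne]
  rfl

/-- Adjacency in the model `G(3,3,3,3)`, whose vertices `(part, cycle, position)` are encoded in
`ℕ` so that the kernel runs the finite check below quickly. -/
def modelAdj (u v : ℕ × ℕ × ℕ) : Bool :=
  offsetAdj (u.2.1 == v.2.1) u.1 v.1 ((v.2.2 + 4 - u.2.2) % 4)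

def modelVertices : List (ℕ × ℕ × ℕ) := List.range 4 ×ˢ List.range 3 ×ˢ List.range 4

theorem mem_modelVertices {v : ℕ × ℕ × ℕ} :
    v ∈ modelVertices ↔ v.1 < 4 ∧ v.2.1 < 3 ∧ v.2.2 < 4 := by
  obtain ⟨i, c, x⟩ := v
  simp [modelVertices, List.mem_product]

/-- The cycle of `z` can be realised in every `G(m)` with all `mᵢ ≥ 2`: it is a cycle used by `T`
in `z`'s part, or `T` uses at most one cycle there and a different one is free. -/
def liftable (T : List (ℕ × ℕ × ℕ)) (z : ℕ × ℕ × ℕ) : Bool :=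
  T.any (fun a => a.1 == z.1 && a.2.1 == z.2.1) ||
    T.all fun a => T.all fun b => !(a.1 == z.1 && b.1 == z.1) || a.2.1 == b.2.1

theorem model_common_neighbor_check : ((List.range 4).all fun i => modelVertices.all fun v =>
    modelVertices.all fun w =>
      modelAdj (i, 0, 0) v || modelAdj (i, 0, 0) w || modelAdj v w ||
        modelVertices.any fun z => modelAdj z (i, 0, 0) && modelAdj z v && modelAdj z w &&
          liftable [(i, 0, 0), v, w] z) = true := by
  decide +kernel

theorem exists_liftable_common_modelAdj {u v w : ℕ × ℕ × ℕ} (hu : u ∈ modelVertices)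
    (hu₀ : u.2 = (0, 0)) (hv : v ∈ modelVertices) (hw : w ∈ modelVertices)
    (huv : modelAdj u v = false) (huw : modelAdj u w = false) (hvw : modelAdj v w = false) :
    ∃ z ∈ modelVertices, modelAdj z u = true ∧ modelAdj z v = true ∧ modelAdj z w = true ∧
      liftable [u, v, w] z = true := by
  obtain ⟨i, u₂⟩ := u
  obtain rfl : u₂ = (0, 0) := hu₀
  have check := model_common_neighbor_check
  simp only [List.all_eq_true, List.any_eq_true, Bool.or_eq_true, Bool.and_eq_true] at check
  rcases check i (List.mem_range.2 (mem_modelVertices.1 hu).1) v hv w hw with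
    ((h | h) | h) | ⟨z, hz, ⟨⟨hzu, hzv⟩, hzw⟩, hlift⟩
  · simp [h] at huv
  · simp [h] at huw
  · simp [h] at hvw
  · exact ⟨z, hz, hzu, hzv, hzw, hlift⟩

theorem val_add_four_sub_val_mod_four (x x' : ZMod 4) :
    (x'.val + 4 - x.val) % 4 = (x' - x).val := by
  revert x x'; decide

theorem adj_iff_modelAdj {m : Fin 4 → ℕ} (d : ZMod 4) {a b : Vertex m} {γ γ' : ℕ}
    (h : a.1.1 = b.1.1 → (a.1.2.1 = b.1.2.1 ↔ γ = γ')) :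
    (twistedGraph m).Adj a b ↔
      modelAdj (a.1.1, γ, (a.1.2.2 - d).val) (b.1.1, γ', (b.1.2.2 - d).val) = true := by
  rw [twistedGraph_adj_iff, modelAdj, val_add_four_sub_val_mod_four, sub_sub_sub_cancel_right,
    offsetAdj_congr (t := γ == γ')]
  intro hab
  simpa using h (Fin.ext hab)

def project {m : Fin 4 → ℕ} (c : ℕ → ℕ) (d : ZMod 4) (a : Vertex m) : ℕ × ℕ × ℕ :=
  (a.1.1, c a.1.2.1, (a.1.2.2 - d).val)

section Lift

variable {m : Fin 4 → ℕ} {S : List (Vertex m)} {c : ℕ → ℕ}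

theorem adj_iff_modelAdj_project (hc : ∀ a ∈ S, ∀ b ∈ S, c a.1.2.1 = c b.1.2.1 → a.1.2.1 = b.1.2.1)
    (d : ZMod 4) {a b : Vertex m} (ha : a ∈ S) (hb : b ∈ S) :
    (twistedGraph m).Adj a b ↔ modelAdj (project c d a) (project c d b) = true :=
  adj_iff_modelAdj d fun _ => ⟨congrArg c, hc a ha b hb⟩

theorem exists_cycle_lift (hc : ∀ a ∈ S, ∀ b ∈ S, c a.1.2.1 = c b.1.2.1 → a.1.2.1 = b.1.2.1)
    (f : Vertex m → ℕ) {k : Fin 4} (hk : 2 ≤ m k) {γ y : ℕ}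
    (h : liftable (S.map fun a => (a.1.1, c a.1.2.1, f a)) (k, γ, y) = true) :
    ∃ j < m k, ∀ a ∈ S, k = a.1.1 → (j = a.1.2.1 ↔ γ = c a.1.2.1) := by
  simp only [liftable, List.any_map, List.all_map, Bool.or_eq_true, List.any_eq_true,
    List.all_eq_true, Function.comp_apply, Bool.and_eq_true, beq_iff_eq, Fin.val_inj,
    Bool.not_and] at h
  by_cases hold : ∃ a ∈ S, a.1.1 = k ∧ c a.1.2.1 = γ
  · obtain ⟨a₀, ha₀, rfl, rfl⟩ := hold
    exact ⟨a₀.1.2.1, a₀.2, fun a ha _ => ⟨congrArg c, hc a₀ ha₀ a ha⟩⟩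
  push Not at hold
  have hone : ∀ a ∈ S, ∀ b ∈ S, a.1.1 = k → b.1.1 = k → a.1.2.1 = b.1.2.1 := by
    intro a ha b hb hak hbk
    refine hc a ha b hb ?_
    rcases h with ⟨a', ha', hk', hγ'⟩ | h
    · exact absurd hγ' (hold a' ha' hk')
    · simpa [hak, hbk] using h a ha b hb
  by_cases hpart : ∃ a ∈ S, a.1.1 = k
  · obtain ⟨a₀, ha₀, hk₀⟩ := hpart
    refine ⟨if a₀.1.2.1 = 0 then 1 else 0, by split_ifs <;> omega, fun a ha hka => ?_⟩
    have hsame := hone a₀ ha₀ a ha hk₀ hka.symm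
    refine iff_of_false (by split_ifs <;> omega) fun hγ => hold a ha hka.symm ?_
    rw [hγ]
  · push Not at hpart
    exact ⟨0, by omega, fun a ha hka => absurd hka.symm (hpart a ha)⟩

theorem exists_adj_iff_modelAdj (hm : ∀ i, 2 ≤ m i)
    (hc : ∀ a ∈ S, ∀ b ∈ S, c a.1.2.1 = c b.1.2.1 → a.1.2.1 = b.1.2.1) (d : ZMod 4)
    {z : ℕ × ℕ × ℕ} (hz : z ∈ modelVertices) (hlift : liftable (S.map (project c d)) z = true) :
    ∃ v : Vertex m, ∀ a ∈ S, (twistedGraph m).Adj v a ↔ modelAdj z (project c d a) = true := by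
  obtain ⟨hz₁, -, hz₃⟩ := mem_modelVertices.1 hz
  obtain ⟨j, hj, hjS⟩ := exists_cycle_lift hc _ (hm ⟨z.1, hz₁⟩) hlift
  refine ⟨⟨(⟨z.1, hz₁⟩, j, z.2.2 + d), hj⟩, fun a ha => ?_⟩
  rw [adj_iff_modelAdj d (hjS a ha)]
  simp [project, ZMod.val_cast_of_lt hz₃]

end Lift

def cycleCode (j₀ j₁ j : ℕ) : ℕ := if j = j₀ then 0 else if j = j₁ then 1 else 2

theorem cycleCode_lt (j₀ j₁ j : ℕ) : cycleCode j₀ j₁ j < 3 := by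
  unfold cycleCode; split_ifs <;> omega

theorem cycleCode_injOn {j₀ j₁ j₂ a b : ℕ} (ha : a ∈ [j₀, j₁, j₂]) (hb : b ∈ [j₀, j₁, j₂])
    (h : cycleCode j₀ j₁ a = cycleCode j₀ j₁ b) : a = b := by
  simp only [List.mem_cons, List.not_mem_nil, or_false] at ha hb
  unfold cycleCode at h
  rcases ha with rfl | rfl | rfl <;> rcases hb with rfl | rfl | rfl <;> split_ifs at h <;> omega

theorem project_cycleCode_mem {m : Fin 4 → ℕ} (j₀ j₁ : ℕ) (d : ZMod 4) (a : Vertex m) :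
    project (cycleCode j₀ j₁) d a ∈ modelVertices :=
  mem_modelVertices.2 ⟨a.1.1.2, cycleCode_lt _ _ _, ZMod.val_lt (a.1.2.2 - d)⟩

end TwistedGraph

open TwistedGraph

theorem stmt_13_general (m : Fin 4 → ℕ) (hm : ∀ i, 2 ≤ m i)
    (p q r : {v : Fin 4 × ℕ × ZMod 4 // v.2.1 < m v.1})
    (npq : ¬ (twistedGraph m).Adj p q)
    (npr : ¬ (twistedGraph m).Adj p r)
    (nqr : ¬ (twistedGraph m).Adj q r) :
    ∃ v, (twistedGraph m).Adj v p ∧ (twistedGraph m).Adj v q ∧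
      (twistedGraph m).Adj v r := by
  set c := cycleCode p.1.2.1 q.1.2.1
  set d := p.1.2.2
  have hc : ∀ a ∈ [p, q, r], ∀ b ∈ [p, q, r], c a.1.2.1 = c b.1.2.1 → a.1.2.1 = b.1.2.1 :=
    fun a ha b hb => cycleCode_injOn (List.mem_map_of_mem (f := fun a : Vertex m => a.1.2.1) ha)
      (List.mem_map_of_mem (f := fun a : Vertex m => a.1.2.1) hb)
  have hadj {a b} (ha : a ∈ [p, q, r]) (hb : b ∈ [p, q, r]) :=
    adj_iff_modelAdj_project hc d ha hb
  have hmem (a : Vertex m) := project_cycleCode_mem p.1.2.1 q.1.2.1 d a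
  obtain ⟨z, hz, hzp, hzq, hzr, hlift⟩ := exists_liftable_common_modelAdj
    (hmem p) (by simp [project, d, cycleCode]) (hmem q) (hmem r)
    (by simpa [hadj] using npq) (by simpa [hadj] using npr) (by simpa [hadj] using nqr)
  obtain ⟨v, hv⟩ := exists_adj_iff_modelAdj hm hc d hz hlift
  exact ⟨v, (hv p (by simp)).2 hzp, (hv q (by simp)).2 hzq, (hv r (by simp)).2 hzr⟩

theorem stmt_13 (m : Fin 4 → ℕ) (hm : ∀ i, 2 ≤ m i)
    (p q r : {v : Fin 4 × ℕ × ZMod 4 // v.2.1 < m v.1})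
    (hpq : p ≠ q) (hpr : p ≠ r) (hqr : q ≠ r)
    (npq : ¬ (twistedGraph m).Adj p q)
    (npr : ¬ (twistedGraph m).Adj p r)
    (nqr : ¬ (twistedGraph m).Adj q r) :
    ∃ v, (twistedGraph m).Adj v p ∧ (twistedGraph m).Adj v q ∧
      (twistedGraph m).Adj v r :=
  stmt_13_general m hm p q r npq npr nqr
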